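/- arXiv:2401.09870 — 6 statements merged into one kernel-verified Lean document; each statement's English description precedes it below -/
import Mathlib

section
/- Let n and N be natural numbers, R ≥ 0 and ε ≥ 0 real numbers, and let s, s' : ℕ → ℝⁿ be two sequences such that ‖s(i+1) − s(i)‖ ≤ R and ‖s'(i+1) − s'(i)‖ ≤ R for all i < N, with ‖s(0) − s'(0)‖ ≤ ε and ‖s(N) − s'(N)‖ ≤ ε. Then for every i ≤ N, ‖s(i) − s'(i)‖ ≤ 2·min(i, N − i)·R + ε. -/
/-! The difference `s - s'` moves by at most `2R` per step, so its norm can grow by at most `2R`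
per step away from either endpoint, where it is at most `ε`. -/

theorem dist_le_mul_of_dist_succ_le {α : Type*} [PseudoMetricSpace α] {f : ℕ → α} {m n : ℕ}
    {C : ℝ} (hmn : m ≤ n) (hf : ∀ k, m ≤ k → k < n → dist (f k) (f (k + 1)) ≤ C) :
    dist (f m) (f n) ≤ ((n - m : ℕ) : ℝ) * C := by
  simpa using dist_le_Ico_sum_of_dist_le hmn (d := fun _ => C) fun {k} hm hn => hf k hm hn

theorem dist_sub_apply_succ_le_two_mul {E : Type*} [SeminormedAddCommGroup E] {s s' : ℕ → E} {k : ℕ}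
    {R : ℝ} (hs : ‖s (k + 1) - s k‖ ≤ R) (hs' : ‖s' (k + 1) - s' k‖ ≤ R) :
    dist ((s - s') k) ((s - s') (k + 1)) ≤ 2 * R := by
  calc dist ((s - s') k) ((s - s') (k + 1))
      ≤ dist (s k) (s (k + 1)) + dist (s' k) (s' (k + 1)) := dist_sub_sub_le _ _ _ _
    _ ≤ 2 * R := by rw [dist_comm, dist_eq_norm, dist_comm, dist_eq_norm]; linarith

theorem trajectory_two_sided_deviation_general
    (n N : ℕ) (R ε : ℝ)
    (s s' : ℕ → EuclideanSpace ℝ (Fin n))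
    (hs : ∀ i < N, ‖s (i + 1) - s i‖ ≤ R)
    (hs' : ∀ i < N, ‖s' (i + 1) - s' i‖ ≤ R)
    (h0 : ‖s 0 - s' 0‖ ≤ ε)
    (hN : ‖s N - s' N‖ ≤ ε) :
    ∀ i ≤ N, ‖s i - s' i‖ ≤ 2 * ((min i (N - i) : ℕ) : ℝ) * R + ε := by
  intro i hi
  set d := s - s'
  have hd0 : ‖d 0‖ ≤ ε := h0
  have hdN : ‖d N‖ ≤ ε := hN
  have hd : ∀ k, k < N → dist (d k) (d (k + 1)) ≤ 2 * R := fun k hk =>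
    dist_sub_apply_succ_le_two_mul (hs k hk) (hs' k hk)
  have from_start : ‖d i‖ ≤ 2 * (i : ℝ) * R + ε := by
    have := dist_le_mul_of_dist_succ_le (Nat.zero_le i) fun k _ hk => hd k (by omega)
    rw [dist_comm, dist_eq_norm, Nat.sub_zero] at this
    linarith [norm_le_norm_add_norm_sub' (d i) (d 0)]
  have from_end : ‖d i‖ ≤ 2 * ((N - i : ℕ) : ℝ) * R + ε := by
    have := dist_le_mul_of_dist_succ_le hi fun k _ => hd k
    rw [dist_eq_norm] at this
    linarith [norm_le_norm_add_norm_sub' (d i) (d N)]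
  rcases min_choice i (N - i) with h | h <;> rw [h] <;> assumption

theorem trajectory_two_sided_deviation
    (n N : ℕ) (R ε : ℝ) (hR : 0 ≤ R) (hε : 0 ≤ ε)
    (s s' : ℕ → EuclideanSpace ℝ (Fin n))
    (hs : ∀ i < N, ‖s (i + 1) - s i‖ ≤ R)
    (hs' : ∀ i < N, ‖s' (i + 1) - s' i‖ ≤ R)
    (h0 : ‖s 0 - s' 0‖ ≤ ε)
    (hN : ‖s N - s' N‖ ≤ ε) :
    ∀ i ≤ N, ‖s i - s' i‖ ≤ 2 * ((min i (N - i) : ℕ) : ℝ) * R + ε :=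
  trajectory_two_sided_deviation_general n N R ε s s' hs hs' h0 hN
end

section
/- Let n and N be natural numbers, R ≥ 0 and ε ≥ 0 real numbers, g* ∈ ℝⁿ, and let s, s' : ℕ → ℝⁿ be two sequences such that ‖s(i+1) − s(i)‖ ≤ R and ‖s'(i+1) − s'(i)‖ ≤ R for all i < N, with ‖s(0) − s'(0)‖ ≤ ε and ‖s(N) − s'(N)‖ ≤ ε. Then for every i ≤ N, |‖g* − s(i)‖ − ‖g* − s'(i)‖| ≤ 2·min(i, N − i)·R + ε. -/
lemma step_bound_aux {n N : ℕ} {R : ℝ}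
    (s : ℕ → EuclideanSpace ℝ (Fin n))
    (hs : ∀ i < N, ‖s (i + 1) - s i‖ ≤ R) :
    ∀ a b, a ≤ b → b ≤ N → ‖s b - s a‖ ≤ ((b - a : ℕ) : ℝ) * R := by
  intro a b hab hbN
  induction b with
  | zero =>
    interval_cases a
    simp
  | succ b ih =>
    rcases Nat.eq_or_lt_of_le hab with h | h
    · subst h; simp
    · have hab' : a ≤ b := Nat.lt_succ_iff.mp h
      have hbN' : b ≤ N := Nat.le_of_succ_le hbN
      calc ‖s (b+1) - s a‖ ≤ ‖s (b+1) - s b‖ + ‖s b - s a‖ := norm_sub_le_norm_sub_add_norm_sub _ _ _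
        _ ≤ R + ((b - a : ℕ) : ℝ) * R := add_le_add (hs b hbN) (ih hab' hbN')
        _ = ((b + 1 - a : ℕ) : ℝ) * R := by
            rw [Nat.succ_sub hab']
            push_cast
            ring

theorem reward_difference_two_sided_bound
    (n N : ℕ) (R ε : ℝ) (hR : 0 ≤ R) (hε : 0 ≤ ε)
    (gstar : EuclideanSpace ℝ (Fin n))
    (s s' : ℕ → EuclideanSpace ℝ (Fin n))
    (hs : ∀ i < N, ‖s (i + 1) - s i‖ ≤ R)
    (hs' : ∀ i < N, ‖s' (i + 1) - s' i‖ ≤ R)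
    (h0 : ‖s 0 - s' 0‖ ≤ ε)
    (hN : ‖s N - s' N‖ ≤ ε) :
    ∀ i ≤ N, |‖gstar - s i‖ - ‖gstar - s' i‖| ≤ 2 * ((min i (N - i) : ℕ) : ℝ) * R + ε := by
  intro i hiN
  have key : ‖s i - s' i‖ ≤ 2 * ((min i (N - i) : ℕ) : ℝ) * R + ε := by
    rcases le_total i (N - i) with hmin | hmin
    · rw [min_eq_left hmin]
      have h1 : ‖s i - s 0‖ ≤ (i : ℝ) * R := by
        simpa using step_bound_aux s hs 0 i (Nat.zero_le _) hiN
      have h2 : ‖s' i - s' 0‖ ≤ (i : ℝ) * R := by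
        simpa using step_bound_aux s' hs' 0 i (Nat.zero_le _) hiN
      calc ‖s i - s' i‖ ≤ ‖s i - s' 0‖ + ‖s' 0 - s' i‖ :=
            norm_sub_le_norm_sub_add_norm_sub _ _ _
        _ ≤ ‖s i - s 0‖ + ‖s 0 - s' 0‖ + ‖s' 0 - s' i‖ := by
            gcongr
            exact norm_sub_le_norm_sub_add_norm_sub _ _ _
        _ ≤ (i : ℝ) * R + ε + (i : ℝ) * R := by
            rw [norm_sub_rev (s' 0)]
            exact add_le_add (add_le_add h1 h0) h2
        _ = 2 * ((i : ℕ) : ℝ) * R + ε := by ring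
    · rw [min_eq_right hmin]
      have h1 : ‖s N - s i‖ ≤ ((N - i : ℕ) : ℝ) * R := step_bound_aux s hs i N hiN le_rfl
      have h2 : ‖s' N - s' i‖ ≤ ((N - i : ℕ) : ℝ) * R := step_bound_aux s' hs' i N hiN le_rfl
      calc ‖s i - s' i‖ ≤ ‖s i - s' N‖ + ‖s' N - s' i‖ :=
            norm_sub_le_norm_sub_add_norm_sub _ _ _
        _ ≤ ‖s i - s N‖ + ‖s N - s' N‖ + ‖s' N - s' i‖ := by
            gcongr
            exact norm_sub_le_norm_sub_add_norm_sub _ _ _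
        _ ≤ ((N - i : ℕ) : ℝ) * R + ε + ((N - i : ℕ) : ℝ) * R := by
            rw [norm_sub_rev (s i)]
            exact add_le_add (add_le_add h1 hN) h2
        _ = 2 * ((N - i : ℕ) : ℝ) * R + ε := by ring
  calc |‖gstar - s i‖ - ‖gstar - s' i‖| ≤ ‖(gstar - s i) - (gstar - s' i)‖ :=
        abs_norm_sub_norm_le _ _
    _ = ‖s' i - s i‖ := by congr 1; abel
    _ = ‖s i - s' i‖ := norm_sub_rev _ _
    _ ≤ _ := key
end

section
/- Let n and M be natural numbers, R ≥ 0, ε ≥ 0 and 0 ≤ γ < 1 real numbers, g* ∈ ℝⁿ, and let s, s' : ℕ → ℝⁿ be two sequences such that ‖s(i+1) − s(i)‖ ≤ R and ‖s'(i+1) − s'(i)‖ ≤ R for all i < 2M, with ‖s(0) − s'(0)‖ ≤ ε and ‖s(2M) − s'(2M)‖ ≤ ε. Then |Σ_{i=0}^{2M} γ^i·(‖g* − s(i)‖ − ‖g* − s'(i)‖)| ≤ (Σ_{i=0}^{M} γ^i·i + Σ_{i=M}^{2M} γ^i·(2M − i))·2R + ((1 − γ^{2M+1})/(1 − γ))·ε.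 -/
/-!
Two trajectories whose steps are at most `R` long drift apart by at most `2R` per step, so
`‖s i - s' i‖` is at most `ε + 2R i` counting from the common start and at most
`ε + 2R (2M - i)` counting back from the common end. Since `x ↦ -‖g* - x‖` is 1-Lipschitz,
the discounted reward difference is bounded by the discounted sum of the smaller of these two
bounds, which the split sum majorises.
-/

open Finset

section Trajectories

variable {E : Type*} [SeminormedAddCommGroup E]

lemma dist_sub_sub_le_of_step_le {s s' : ℕ → E} {R : ℝ} {N : ℕ}
    (hs : ∀ i < N, ‖s (i + 1) - s i‖ ≤ R) (hs' : ∀ i < N, ‖s' (i + 1) - s' i‖ ≤ R)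
    {i j : ℕ} (hij : i ≤ j) (hj : j ≤ N) :
    dist (s i - s' i) (s j - s' j) ≤ 2 * R * (j - i : ℕ) := by
  have hstep : ∀ {k}, i ≤ k → k < j →
      dist (s k - s' k) (s (k + 1) - s' (k + 1)) ≤ 2 * R := by
    intro k _ hk
    calc dist (s k - s' k) (s (k + 1) - s' (k + 1))
        = ‖(s (k + 1) - s k) - (s' (k + 1) - s' k)‖ := by
          rw [dist_comm, dist_eq_norm]; congr 1; abel
      _ ≤ ‖s (k + 1) - s k‖ + ‖s' (k + 1) - s' k‖ := norm_sub_le _ _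
      _ ≤ 2 * R := by linarith [hs k (by omega), hs' k (by omega)]
  simpa [mul_comm] using dist_le_Ico_sum_of_dist_le hij hstep

lemma norm_sub_le_of_step_le_of_endpoints {s s' : ℕ → E} {R ε : ℝ} {N : ℕ}
    (hs : ∀ i < N, ‖s (i + 1) - s i‖ ≤ R) (hs' : ∀ i < N, ‖s' (i + 1) - s' i‖ ≤ R)
    (h0 : ‖s 0 - s' 0‖ ≤ ε) (hN : ‖s N - s' N‖ ≤ ε) {i : ℕ} (hi : i ≤ N) :
    ‖s i - s' i‖ ≤ ε + 2 * R * (min i (N - i) : ℕ) := by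
  have hfwd := dist_sub_sub_le_of_step_le hs hs' (Nat.zero_le i) hi
  have hbwd := dist_sub_sub_le_of_step_le hs hs' hi le_rfl
  rw [dist_eq_norm, Nat.sub_zero] at hfwd
  rw [dist_eq_norm] at hbwd
  have hfwd' := norm_le_norm_add_norm_sub (s 0 - s' 0) (s i - s' i)
  have hbwd' := norm_le_norm_add_norm_sub' (s i - s' i) (s N - s' N)
  rcases le_total i (N - i) with h | h
  · rw [min_eq_left h]; linarith
  · rw [min_eq_right h]; linarith

lemma abs_sum_mul_norm_sub_sub_norm_sub_le {ι : Type*} (t : Finset ι) (w : ι → ℝ) (hw : ∀ i ∈ t, 0 ≤ w i) (g : E) (x y : ι → E) :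
    |∑ i ∈ t, w i * (‖g - x i‖ - ‖g - y i‖)| ≤ ∑ i ∈ t, w i * ‖x i - y i‖ := by
  refine (abs_sum_le_sum_abs _ _).trans (sum_le_sum fun i hi => ?_)
  rw [abs_mul, abs_of_nonneg (hw i hi)]
  refine mul_le_mul_of_nonneg_left ?_ (hw i hi)
  simpa only [← dist_eq_norm, dist_comm g] using abs_dist_sub_le (x i) (y i) g

end Trajectories

lemma sum_range_mul_min_le_split_sum {w : ℕ → ℝ} (hw : ∀ i, 0 ≤ w i) (M : ℕ) :
    ∑ i ∈ range (2 * M + 1), w i * (min i (2 * M - i) : ℕ) ≤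
      ∑ i ∈ range (M + 1), w i * (i : ℝ) + ∑ i ∈ Icc M (2 * M), w i * ((2 * M - i : ℕ) : ℝ) := by
  rw [← sum_range_add_sum_Ico _ (by omega : M + 1 ≤ 2 * M + 1)]
  have hsub : Ico (M + 1) (2 * M + 1) ⊆ Icc M (2 * M) := fun i hi => by
    simp only [mem_Ico, mem_Icc] at hi ⊢
    omega
  gcongr ?_ + ?_
  · exact sum_le_sum fun i _ => by gcongr; exacts [hw i, min_le_left _ _]
  · calc ∑ i ∈ Ico (M + 1) (2 * M + 1), w i * (min i (2 * M - i) : ℕ)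
        ≤ ∑ i ∈ Ico (M + 1) (2 * M + 1), w i * ((2 * M - i : ℕ) : ℝ) :=
          sum_le_sum fun i _ => by gcongr; exacts [hw i, min_le_right _ _]
      _ ≤ ∑ i ∈ Icc M (2 * M), w i * ((2 * M - i : ℕ) : ℝ) :=
          sum_le_sum_of_subset_of_nonneg hsub fun i _ _ => mul_nonneg (hw i) (Nat.cast_nonneg _)

theorem suboptimality_bound_split_sum_general
    (n M : ℕ) (R ε γ : ℝ) (hR : 0 ≤ R)
    (hγ0 : 0 ≤ γ) (hγ1 : γ < 1)
    (gstar : EuclideanSpace ℝ (Fin n))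
    (s s' : ℕ → EuclideanSpace ℝ (Fin n))
    (hs : ∀ i < 2 * M, ‖s (i + 1) - s i‖ ≤ R)
    (hs' : ∀ i < 2 * M, ‖s' (i + 1) - s' i‖ ≤ R)
    (h0 : ‖s 0 - s' 0‖ ≤ ε)
    (hN : ‖s (2 * M) - s' (2 * M)‖ ≤ ε) :
    |∑ i ∈ Finset.range (2 * M + 1), γ ^ i * (‖gstar - s i‖ - ‖gstar - s' i‖)| ≤
      (∑ i ∈ Finset.range (M + 1), γ ^ i * (i : ℝ) +
        ∑ i ∈ Finset.Icc M (2 * M), γ ^ i * ((2 * M - i : ℕ) : ℝ)) * (2 * R) +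
        ((1 - γ ^ (2 * M + 1)) / (1 - γ)) * ε := by
  have hw : ∀ i, 0 ≤ γ ^ i := fun i => pow_nonneg hγ0 i
  calc |∑ i ∈ range (2 * M + 1), γ ^ i * (‖gstar - s i‖ - ‖gstar - s' i‖)|
      ≤ ∑ i ∈ range (2 * M + 1), γ ^ i * ‖s i - s' i‖ :=
        abs_sum_mul_norm_sub_sub_norm_sub_le _ _ (fun i _ => hw i) gstar s s'
    _ ≤ ∑ i ∈ range (2 * M + 1), γ ^ i * (ε + 2 * R * (min i (2 * M - i) : ℕ)) := by
        gcongr with i hi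
        exact norm_sub_le_of_step_le_of_endpoints hs hs' h0 hN (Nat.lt_succ_iff.mp (mem_range.mp hi))
    _ = (∑ i ∈ range (2 * M + 1), γ ^ i * (min i (2 * M - i) : ℕ)) * (2 * R) +
          (∑ i ∈ range (2 * M + 1), γ ^ i) * ε := by
        simp only [mul_add, sum_add_distrib, sum_mul]
        ring_nf
    _ ≤ _ := by
        rw [geom_sum_eq hγ1.ne, ← neg_div_neg_eq, neg_sub, neg_sub]
        gcongr
        exact sum_range_mul_min_le_split_sum hw M

theorem suboptimality_bound_split_sum
    (n M : ℕ) (R ε γ : ℝ) (hR : 0 ≤ R) (hε : 0 ≤ ε)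
    (hγ0 : 0 ≤ γ) (hγ1 : γ < 1)
    (gstar : EuclideanSpace ℝ (Fin n))
    (s s' : ℕ → EuclideanSpace ℝ (Fin n))
    (hs : ∀ i < 2 * M, ‖s (i + 1) - s i‖ ≤ R)
    (hs' : ∀ i < 2 * M, ‖s' (i + 1) - s' i‖ ≤ R)
    (h0 : ‖s 0 - s' 0‖ ≤ ε)
    (hN : ‖s (2 * M) - s' (2 * M)‖ ≤ ε) :
    |∑ i ∈ Finset.range (2 * M + 1), γ ^ i * (‖gstar - s i‖ - ‖gstar - s' i‖)| ≤
      (∑ i ∈ Finset.range (M + 1), γ ^ i * (i : ℝ) +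
        ∑ i ∈ Finset.Icc M (2 * M), γ ^ i * ((2 * M - i : ℕ) : ℝ)) * (2 * R) +
        ((1 - γ ^ (2 * M + 1)) / (1 - γ)) * ε :=
  suboptimality_bound_split_sum_general n M R ε γ hR hγ0 hγ1 gstar s s' hs hs' h0 hN
end

section
/- Let n, k ≥ 1 and m be natural numbers, R ≥ 0 and B ≥ 0 real numbers, and let s, s' : ℕ → ℝⁿ be two sequences such that ‖s(i+1) − s(i)‖ ≤ R and ‖s'(i+1) − s'(i)‖ ≤ R for all i < m·k, and ‖s(j·k) − s'(j·k)‖ ≤ B for every j ≤ m. Then for every i ≤ m·k, ‖s(i) − s'(i)‖ ≤ k·R + B. -/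
lemma drift_bound {n m k : ℕ} {R : ℝ} (hR : 0 ≤ R)
    (s : ℕ → EuclideanSpace ℝ (Fin n))
    (hs : ∀ i < m * k, ‖s (i + 1) - s i‖ ≤ R) :
    ∀ t a, a + t ≤ m * k → ‖s (a + t) - s a‖ ≤ t * R := by
  intro t
  induction t with
  | zero => intro a _; simp
  | succ t ih =>
    intro a h
    have h1 : a + t < m * k := by omega
    calc ‖s (a + (t + 1)) - s a‖
        = ‖(s (a + t + 1) - s (a + t)) + (s (a + t) - s a)‖ := by
          rw [show a + (t + 1) = a + t + 1 by omega]; congr 1; abel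
      _ ≤ ‖s (a + t + 1) - s (a + t)‖ + ‖s (a + t) - s a‖ := norm_add_le _ _
      _ ≤ R + t * R := add_le_add (hs _ h1) (ih a (by omega))
      _ = (t + 1 : ℕ) * R := by push_cast; ring

theorem synchronized_trajectory_deviation
    (n k m : ℕ) (hk : 1 ≤ k) (R B : ℝ) (hR : 0 ≤ R) (hB : 0 ≤ B)
    (s s' : ℕ → EuclideanSpace ℝ (Fin n))
    (hs : ∀ i < m * k, ‖s (i + 1) - s i‖ ≤ R)
    (hs' : ∀ i < m * k, ‖s' (i + 1) - s' i‖ ≤ R)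
    (hsync : ∀ j ≤ m, ‖s (j * k) - s' (j * k)‖ ≤ B) :
    ∀ i ≤ m * k, ‖s i - s' i‖ ≤ k * R + B := by
  intro i hi
  set j := i / k with hj
  set r := i % k with hr
  have hik : i = j * k + r := by
    rw [hj, hr, Nat.mul_comm]; exact (Nat.div_add_mod i k).symm
  have hrk : r < k := Nat.mod_lt _ (by omega)
  have hjm : j ≤ m := by
    have h1 : j * k ≤ m * k := le_trans (by omega) hi
    exact Nat.le_of_mul_le_mul_right h1 (by omega)
  by_cases hcase : 2 * r ≤ k
  · -- use left sync point j*k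
    have hd : ‖s i - s (j * k)‖ ≤ r * R := by
      have := drift_bound hR s hs r (j * k) (by rw [← hik]; exact hi)
      rwa [← hik] at this
    have hd' : ‖s' i - s' (j * k)‖ ≤ r * R := by
      have := drift_bound hR s' hs' r (j * k) (by rw [← hik]; exact hi)
      rwa [← hik] at this
    have hsy := hsync j hjm
    have : ‖s i - s' i‖ ≤ ‖s i - s (j * k)‖ + ‖s (j * k) - s' (j * k)‖ + ‖s' (j * k) - s' i‖ := by
      have := norm_sub_le_norm_sub_add_norm_sub (s i) (s (j*k)) (s' i)
      calc ‖s i - s' i‖ ≤ ‖s i - s (j*k)‖ + ‖s (j*k) - s' i‖ := norm_sub_le_norm_sub_add_norm_sub _ _ _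
        _ ≤ ‖s i - s (j*k)‖ + (‖s (j*k) - s' (j*k)‖ + ‖s' (j*k) - s' i‖) := by
            gcongr; exact norm_sub_le_norm_sub_add_norm_sub _ _ _
        _ = _ := by ring
    have hrR : (r : ℝ) * R ≤ (k : ℝ) * R / 2 := by
      have : (2 * r : ℝ) ≤ k := by exact_mod_cast hcase
      nlinarith
    rw [norm_sub_rev (s' (j*k))] at this
    calc ‖s i - s' i‖ ≤ r * R + B + r * R := by
          refine this.trans ?_; gcongr
      _ ≤ k * R + B := by nlinarith
  · -- use right sync point (j+1)*k
    push_neg at hcase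
    have hjm' : j + 1 ≤ m := by
      have h1 : j * k < m * k := lt_of_lt_of_le (by omega) hi
      have := Nat.lt_of_mul_lt_mul_right h1
      omega
    have hle : i + (k - r) = (j + 1) * k := by rw [hik]; ring_nf; omega
    have hd : ‖s ((j+1) * k) - s i‖ ≤ (k - r : ℕ) * R := by
      have := drift_bound hR s hs (k - r) i (by rw [hle]; exact Nat.mul_le_mul_right k hjm')
      rwa [hle] at this
    have hd' : ‖s' ((j+1) * k) - s' i‖ ≤ (k - r : ℕ) * R := by
      have := drift_bound hR s' hs' (k - r) i (by rw [hle]; exact Nat.mul_le_mul_right k hjm')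
      rwa [hle] at this
    have hsy := hsync (j+1) hjm'
    have htri : ‖s i - s' i‖ ≤ ‖s ((j+1)*k) - s i‖ + ‖s ((j+1)*k) - s' ((j+1)*k)‖ + ‖s' ((j+1)*k) - s' i‖ := by
      calc ‖s i - s' i‖ ≤ ‖s i - s ((j+1)*k)‖ + ‖s ((j+1)*k) - s' i‖ := norm_sub_le_norm_sub_add_norm_sub _ _ _
        _ ≤ ‖s i - s ((j+1)*k)‖ + (‖s ((j+1)*k) - s' ((j+1)*k)‖ + ‖s' ((j+1)*k) - s' i‖) := by
            gcongr; exact norm_sub_le_norm_sub_add_norm_sub _ _ _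
        _ = _ := by rw [norm_sub_rev (s i)]; ring
    have hkr : ((k - r : ℕ) : ℝ) * R ≤ (k : ℝ) * R / 2 := by
      have h1 : ((k - r : ℕ) : ℝ) = (k : ℝ) - r := by
        have : r ≤ k := le_of_lt hrk
        push_cast [this]; ring
      have h2 : (k : ℝ) < 2 * r := by exact_mod_cast hcase
      rw [h1]; nlinarith
    calc ‖s i - s' i‖ ≤ (k - r : ℕ) * R + B + (k - r : ℕ) * R := by
          refine htri.trans ?_; gcongr
      _ ≤ k * R + B := by nlinarith
end

section
/- Let n, k ≥ 1 and m be natural numbers, R ≥ 0 and B ≥ 0 real numbers, g* ∈ ℝⁿ, and let s, s' : ℕ → ℝⁿ be two sequences such that ‖s(i+1) − s(i)‖ ≤ R and ‖s'(i+1) − s'(i)‖ ≤ R for all i < m·k, and ‖s(j·k) − s'(j·k)‖ ≤ B for every j ≤ m. Then for every i ≤ m·k, |‖g* − s(i)‖ − ‖g* − s'(i)‖| ≤ k·R + B. -/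
lemma chain_bound {E : Type*} [NormedAddCommGroup E] (s : ℕ → E) (R : ℝ)
    (a d : ℕ) (h : ∀ i, a ≤ i → i < a + d → ‖s (i + 1) - s i‖ ≤ R) :
    ‖s (a + d) - s a‖ ≤ d * R := by
  induction d with
  | zero => simp
  | succ d ih =>
    have h1 : ‖s (a + d + 1) - s (a + d)‖ ≤ R :=
      h (a + d) (Nat.le_add_right a d) (by omega)
    have h2 : ‖s (a + d) - s a‖ ≤ d * R :=
      ih (fun i hi hi' => h i hi (by omega))
    have key : ‖s (a + d + 1) - s a‖ ≤ R + d * R := by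
      calc ‖s (a + d + 1) - s a‖
          = ‖(s (a + d + 1) - s (a + d)) + (s (a + d) - s a)‖ := by
            rw [sub_add_sub_cancel]
        _ ≤ ‖s (a + d + 1) - s (a + d)‖ + ‖s (a + d) - s a‖ := norm_add_le _ _
        _ ≤ R + d * R := add_le_add h1 h2
    show ‖s (a + d + 1) - s a‖ ≤ (↑(d + 1)) * R
    push_cast
    linarith

theorem synchronized_reward_difference_bound
    (n k m : ℕ) (hk : 1 ≤ k) (R B : ℝ) (hR : 0 ≤ R) (hB : 0 ≤ B)
    (gstar : EuclideanSpace ℝ (Fin n))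
    (s s' : ℕ → EuclideanSpace ℝ (Fin n))
    (hs : ∀ i < m * k, ‖s (i + 1) - s i‖ ≤ R)
    (hs' : ∀ i < m * k, ‖s' (i + 1) - s' i‖ ≤ R)
    (hsync : ∀ j ≤ m, ‖s (j * k) - s' (j * k)‖ ≤ B) :
    ∀ i ≤ m * k, |‖gstar - s i‖ - ‖gstar - s' i‖| ≤ k * R + B := by
  intro i hi
  -- reduce to ‖s i - s' i‖
  have habs : |‖gstar - s i‖ - ‖gstar - s' i‖| ≤ ‖s i - s' i‖ := by
    have := abs_norm_sub_norm_le (gstar - s i) (gstar - s' i)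
    simpa [sub_sub_sub_cancel_left, norm_sub_rev] using this
  refine habs.trans ?_
  set r := i % k with hr
  set j := i / k with hj
  have hik : i = j * k + r := by rw [hj, hr, mul_comm]; exact (Nat.div_add_mod i k).symm
  have hjm : j ≤ m := by
    have h1 := Nat.div_le_div_right (c := k) hi
    rwa [Nat.mul_div_cancel _ (by omega : 0 < k), ← hj] at h1
  have hrk : r < k := Nat.mod_lt _ (by omega)
  -- choose nearest sync point t and step distance d
  obtain ⟨t, d, jj, hjjm, ht, hd, habs2⟩ :
      ∃ t d jj, jj ≤ m ∧ t = jj * k ∧ 2 * d ≤ k ∧ (i = t + d ∨ t = i + d) := by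
    by_cases hcase : 2 * r ≤ k
    · exact ⟨j * k, r, j, hjm, rfl, hcase, Or.inl hik⟩
    · refine ⟨(j + 1) * k, k - r, j + 1, ?_, rfl, by omega, Or.inr (by
        rw [hik]; ring_nf; omega)⟩
      rcases Nat.lt_or_ge j m with h | h
      · omega
      · exfalso; have : j = m := by omega
        subst this; omega
  -- sync bound at t
  have hsyncB : ‖s t - s' t‖ ≤ B := ht ▸ hsync jj hjjm
  have htmk : t ≤ m * k := ht ▸ Nat.mul_le_mul_right k hjjm
  -- chain bounds
  have hchain : ‖s i - s t‖ ≤ d * R ∧ ‖s' i - s' t‖ ≤ d * R := by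
    rcases habs2 with h | h
    · subst h
      exact ⟨chain_bound s R t d (fun i' h1 h2 => hs i' (by omega)),
             chain_bound s' R t d (fun i' h1 h2 => hs' i' (by omega))⟩
    · constructor
      · have := chain_bound s R i d (fun i' h1 h2 => hs i' (by omega))
        rw [← h] at this
        simpa [norm_sub_rev] using this
      · have := chain_bound s' R i d (fun i' h1 h2 => hs' i' (by omega))
        rw [← h] at this
        simpa [norm_sub_rev] using this
  calc ‖s i - s' i‖
      = ‖(s i - s t) + (s t - s' t) + (s' t - s' i)‖ := by abel_nf
    _ ≤ ‖(s i - s t) + (s t - s' t)‖ + ‖s' t - s' i‖ := norm_add_le _ _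
    _ ≤ ‖s i - s t‖ + ‖s t - s' t‖ + ‖s' t - s' i‖ := by
        gcongr; exact norm_add_le _ _
    _ ≤ d * R + B + d * R := by
        refine add_le_add (add_le_add hchain.1 hsyncB) ?_
        simpa [norm_sub_rev] using hchain.2
    _ ≤ k * R + B := by
        have : (2 * d : ℝ) ≤ k := by exact_mod_cast hd
        nlinarith
end

section
/- Let n, k ≥ 1 and m be natural numbers, R ≥ 0, B ≥ 0 and 0 ≤ γ < 1 real numbers, g* ∈ ℝⁿ, and let s, s' : ℕ → ℝⁿ be two sequences such that ‖s(i+1) − s(i)‖ ≤ R and ‖s'(i+1) − s'(i)‖ ≤ R for all i < m·k, and ‖s(j·k) − s'(j·k)‖ ≤ B for every j ≤ m. Then |Σ_{i=0}^{m·k} γ^i·(‖g* − s(i)‖ − ‖g* − s'(i)‖)| ≤ ((1 − γ^{m·k+1})/(1 − γ))·(k·R + B). -/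
/-!
Between two consecutive synchronisation times `j k` and `(j + 1) k`, every index `i` lies within
`k / 2` steps of one of them, so by the triangle inequality through `s (j k)` and `s' (j k)` the two
trajectories stay within `k R + B` of each other. The rewards differ by at most that distance, and
summing the discounted pointwise bound gives the geometric factor.
-/

open Finset

theorem Nat.exists_le_two_mul_abs_sub_mul_le (i m k : ℕ) (hi : i ≤ m * k) :
    ∃ j ≤ m, 2 * |(i : ℝ) - j * k| ≤ k := by
  rcases Nat.eq_zero_or_pos k with rfl | hk
  · exact ⟨0, zero_le _, by simp_all⟩
  -- `j` is `i / k` rounded to the nearest integer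
  have hdiv := Nat.div_add_mod (2 * i + k) (2 * k)
  have hmod := Nat.mod_lt (2 * i + k) (by omega : 0 < 2 * k)
  generalize (2 * i + k) / (2 * k) = j at hdiv
  generalize (2 * i + k) % (2 * k) = r at hdiv hmod
  have hjm : j ≤ m := by
    by_contra! h
    nlinarith
  have hlow : (2 * (j * k) : ℝ) ≤ 2 * i + k := by
    exact_mod_cast (by nlinarith : 2 * (j * k) ≤ 2 * i + k)
  have hupp : (2 * i : ℝ) ≤ 2 * (j * k) + k := by
    exact_mod_cast (by nlinarith : 2 * i ≤ 2 * (j * k) + k)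
  refine ⟨j, hjm, ?_⟩
  rw [← abs_two, ← abs_mul, abs_le]
  constructor <;> linarith

section

variable {α : Type*} [PseudoMetricSpace α] {s s' : ℕ → α} {N : ℕ} {R : ℝ}

theorem dist_le_sub_mul_of_dist_succ_le (hs : ∀ i < N, dist (s i) (s (i + 1)) ≤ R)
    {a b : ℕ} (hab : a ≤ b) (hb : b ≤ N) : dist (s a) (s b) ≤ ((b : ℝ) - a) * R :=
  calc dist (s a) (s b) ≤ ∑ _i ∈ Ico a b, R :=
        dist_le_Ico_sum_of_dist_le hab fun _ hi => hs _ (by omega)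
    _ = ((b : ℝ) - a) * R := by simp [Nat.cast_sub hab]

theorem dist_le_abs_sub_mul_of_dist_succ_le (hs : ∀ i < N, dist (s i) (s (i + 1)) ≤ R)
    {a b : ℕ} (ha : a ≤ N) (hb : b ≤ N) : dist (s a) (s b) ≤ |(a : ℝ) - b| * R := by
  rcases le_total a b with hab | hba
  · rw [abs_sub_comm, abs_of_nonneg (by simpa using hab)]
    exact dist_le_sub_mul_of_dist_succ_le hs hab hb
  · rw [dist_comm, abs_of_nonneg (by simpa using hba)]
    exact dist_le_sub_mul_of_dist_succ_le hs hba ha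

theorem dist_le_mul_add_of_dist_succ_le_of_dist_mul_le {m k : ℕ} {B : ℝ} (hR : 0 ≤ R)
    (hs : ∀ i < m * k, dist (s i) (s (i + 1)) ≤ R)
    (hs' : ∀ i < m * k, dist (s' i) (s' (i + 1)) ≤ R)
    (hsync : ∀ j ≤ m, dist (s (j * k)) (s' (j * k)) ≤ B) {i : ℕ} (hi : i ≤ m * k) :
    dist (s i) (s' i) ≤ k * R + B := by
  obtain ⟨j, hjm, hj⟩ := Nat.exists_le_two_mul_abs_sub_mul_le i m k hi
  have hjk : j * k ≤ m * k := Nat.mul_le_mul_right k hjm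
  calc dist (s i) (s' i)
      ≤ dist (s i) (s (j * k)) + dist (s (j * k)) (s' (j * k)) + dist (s' (j * k)) (s' i) :=
        dist_triangle4 _ _ _ _
    _ ≤ |(i : ℝ) - (j * k : ℕ)| * R + B + |((j * k : ℕ) : ℝ) - i| * R := by
        gcongr
        exacts [dist_le_abs_sub_mul_of_dist_succ_le hs hi hjk, hsync j hjm,
          dist_le_abs_sub_mul_of_dist_succ_le hs' hjk hi]
    _ = 2 * |(i : ℝ) - j * k| * R + B := by
        push_cast; rw [abs_sub_comm ((j : ℝ) * k)]; ring
    _ ≤ k * R + B := by gcongr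

end

theorem abs_sum_pow_mul_le_geom_sum_mul {γ C : ℝ} {f : ℕ → ℝ} {N : ℕ} (hγ : 0 ≤ γ)
    (hf : ∀ i < N, |f i| ≤ C) :
    |∑ i ∈ range N, γ ^ i * f i| ≤ (∑ i ∈ range N, γ ^ i) * C :=
  calc |∑ i ∈ range N, γ ^ i * f i| ≤ ∑ i ∈ range N, |γ ^ i * f i| := abs_sum_le_sum_abs _ _
    _ ≤ ∑ i ∈ range N, γ ^ i * C := by
        gcongr with i hi
        rw [abs_mul, abs_of_nonneg (by positivity)]
        gcongr
        exact hf i (mem_range.mp hi)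
    _ = (∑ i ∈ range N, γ ^ i) * C := (sum_mul _ _ _).symm

theorem suboptimality_bound_bounded_diameter_general
    (n k m : ℕ) (R B γ : ℝ) (hR : 0 ≤ R)
    (hγ0 : 0 ≤ γ) (hγ1 : γ < 1)
    (gstar : EuclideanSpace ℝ (Fin n))
    (s s' : ℕ → EuclideanSpace ℝ (Fin n))
    (hs : ∀ i < m * k, ‖s (i + 1) - s i‖ ≤ R)
    (hs' : ∀ i < m * k, ‖s' (i + 1) - s' i‖ ≤ R)
    (hsync : ∀ j ≤ m, ‖s (j * k) - s' (j * k)‖ ≤ B) :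
    |∑ i ∈ Finset.range (m * k + 1), γ ^ i * (‖gstar - s i‖ - ‖gstar - s' i‖)| ≤
      ((1 - γ ^ (m * k + 1)) / (1 - γ)) * (k * R + B) := by
  have hclose : ∀ i ≤ m * k, dist (s i) (s' i) ≤ k * R + B := fun i hi =>
    dist_le_mul_add_of_dist_succ_le_of_dist_mul_le hR
      (fun i hi => (dist_eq_norm' _ _).trans_le (hs i hi))
      (fun i hi => (dist_eq_norm' _ _).trans_le (hs' i hi))
      (fun j hj => (dist_eq_norm _ _).trans_le (hsync j hj)) hi
  rw [← neg_div_neg_eq, neg_sub, neg_sub, ← geom_sum_eq hγ1.ne]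
  refine abs_sum_pow_mul_le_geom_sum_mul hγ0 fun i hi => ?_
  calc |‖gstar - s i‖ - ‖gstar - s' i‖| = |dist (s i) gstar - dist (s' i) gstar| := by
        rw [dist_eq_norm', dist_eq_norm']
    _ ≤ dist (s i) (s' i) := abs_dist_sub_le _ _ _
    _ ≤ k * R + B := hclose i (Nat.lt_succ_iff.mp hi)

theorem suboptimality_bound_bounded_diameter
    (n k m : ℕ) (hk : 1 ≤ k) (R B γ : ℝ) (hR : 0 ≤ R) (hB : 0 ≤ B)
    (hγ0 : 0 ≤ γ) (hγ1 : γ < 1)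
    (gstar : EuclideanSpace ℝ (Fin n))
    (s s' : ℕ → EuclideanSpace ℝ (Fin n))
    (hs : ∀ i < m * k, ‖s (i + 1) - s i‖ ≤ R)
    (hs' : ∀ i < m * k, ‖s' (i + 1) - s' i‖ ≤ R)
    (hsync : ∀ j ≤ m, ‖s (j * k) - s' (j * k)‖ ≤ B) :
    |∑ i ∈ Finset.range (m * k + 1), γ ^ i * (‖gstar - s i‖ - ‖gstar - s' i‖)| ≤
      ((1 - γ ^ (m * k + 1)) / (1 - γ)) * (k * R + B) :=
  suboptimality_bound_bounded_diameter_general n k m R B γ hR hγ0 hγ1 gstar s s' hs hs' hsync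
end
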